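/- Let {X_i}_{i∈ℤ} be a strictly stationary ergodic real-valued process with absolutely continuous invariant law μ whose distribution function Ψ satisfies ∫_ℝ Ψ(x)^{−1/2} μ(dx) < ∞, adapted to a filtration {F_i} with F_i = σ(X_j : j ≤ i), let S_0 be a measurable function, and suppose there exists δ with 0 < |δ| < 1/2 such that P(X_i − S_0(X_{i-1}) ≤ 0 | F_{i-1}) = 1/2 − δ almost surely for every i, and P(X_i − S_0(X_{i-1}) = 0) = 0. Define T_n = ∫_ℝ (nΨ(x))^{-1} ( Σ_{i=1}^n sgn(X_i − S_0(X_{i-1})) 1_{(-∞,x]}(X_{i-1}) )² μ(dx), where sgn(u) = −1 for u < 0, +1 for u > 0, 0 for u = 0. Then the test based on T_n is consistent: for every constant M > 0, P(T_n > M) → 1 as n → ∞. -/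

import Mathlib

open MeasureTheory ProbabilityTheory Filter
open scoped ENNReal NNReal Topology

/-!
Write `w_i = sgn(X_{i+1} - S₀(X_i))` and `V_n(x) = ∑_{i<n} w_i 1{X_i ≤ x}`. Under the
alternative, `E[w_i | F_i] = 2δ`, so `V_n(x₀) = M_n + 2δ N_n`, where `M_n` is a martingale with
`E M_n² = O(n)` and `N_n = #{i < n : X_i ≤ x₀} ≈ n Ψ(x₀)` by ergodicity. With `Ψ(x₀) = 1/2` and
`Ψ(x₁) = 1/2 + |δ|/2`, moving `x` from `x₀` to `x₁` changes `V_n` by at most the `≈ n|δ|/2`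
points falling in between, so with probability tending to one `|V_n| ≥ n|δ|/4` on `(x₀, x₁]`.
Since `Ψ ≤ 1`, this gives `T_n ≥ n (|δ|/4)² μ(x₀, x₁] → ∞`.
-/

noncomputable section

open Set

lemma Real.measurable_sign : Measurable Real.sign :=
  Measurable.ite measurableSet_Iio measurable_const
    (Measurable.ite measurableSet_Ioi measurable_const measurable_const)

lemma Real.abs_sign_le_one (r : ℝ) : |Real.sign r| ≤ 1 := by
  rcases Real.sign_apply_eq r with h | h | h <;> simp [h]

lemma StieltjesFunction.continuous_of_nullSingletonClass (f : StieltjesFunction ℝ)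
    [NullSingletonClass f.measure] : Continuous f := by
  refine continuous_iff_continuousAt.2 fun x => ?_
  rw [f.mono.continuousAt_iff_leftLim_eq_rightLim, f.rightLim_eq]
  have h := (f.measure_singleton x).symm.trans (MeasureTheory.measure_singleton x)
  rw [ENNReal.ofReal_eq_zero, sub_nonpos] at h
  exact le_antisymm (f.mono.leftLim_le le_rfl) h

namespace ProbabilityTheory

lemma measureReal_Ioc_eq_cdf_sub (μ : Measure ℝ) [IsProbabilityMeasure μ] {a b : ℝ} (hab : a ≤ b) :
    μ.real (Ioc a b) = cdf μ b - cdf μ a := by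
  have h := (cdf μ).measure_Ioc a b
  rw [measure_cdf] at h
  rw [measureReal_def, h, ENNReal.toReal_ofReal (sub_nonneg.2 (monotone_cdf μ hab))]

variable (μ : Measure ℝ) [IsProbabilityMeasure μ] [NullSingletonClass μ]

lemma continuous_cdf : Continuous (cdf μ) := by
  have : NullSingletonClass (cdf μ).measure := by rwa [measure_cdf]
  exact (cdf μ).continuous_of_nullSingletonClass

lemma exists_cdf_eq {p : ℝ} (hp : p ∈ Ioo 0 1) : ∃ x, cdf μ x = p :=
  mem_range_of_exists_le_of_exists_ge (continuous_cdf μ)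
    ((tendsto_cdf_atBot μ).eventually_le_const hp.1).exists
    ((tendsto_cdf_atTop μ).eventually_const_le hp.2).exists

/-- The zero set of a continuous distribution function is closed, hence a ray `Iic t`
with `μ (Iic t) = cdf μ t = 0`. -/
lemma ae_cdf_pos : ∀ᵐ x ∂μ, 0 < cdf μ x := by
  set s := {x | cdf μ x ≤ 0}
  suffices μ s = 0 by simpa [ae_iff] using this
  rcases s.eq_empty_or_nonempty with h | h
  · simp [h]
  have hbdd : BddAbove s := by
    obtain ⟨b, hb⟩ := ((tendsto_cdf_atTop μ).eventually_const_lt one_pos).exists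
    exact ⟨b, fun x hx => le_of_not_gt fun hbx => (hb.trans_le (monotone_cdf μ hbx.le)).not_ge hx⟩
  refine measure_mono_null (show s ⊆ Iic (sSup s) from fun x hx => le_csSup hbdd hx) ?_
  rw [← ofReal_cdf, ENNReal.ofReal_eq_zero]
  exact (isClosed_le (continuous_cdf μ) continuous_const).csSup_mem h hbdd

end ProbabilityTheory

lemma tendsto_avg_of_tendsto_avg_succ {u : ℕ → ℝ} {L : ℝ}
    (h : Tendsto (fun n : ℕ => (n : ℝ)⁻¹ * ∑ i ∈ Finset.range n, u (i + 1)) atTop (𝓝 L)) :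
    Tendsto (fun n : ℕ => (n : ℝ)⁻¹ * ∑ i ∈ Finset.range n, u i) atTop (𝓝 L) := by
  rw [← tendsto_add_atTop_iff_nat 1]
  have hfirst : Tendsto (fun n : ℕ => ((n : ℝ) + 1)⁻¹ * u 0) atTop (𝓝 0) := by
    simpa using tendsto_one_div_add_atTop_nhds_zero_nat.mul_const (u 0)
  have hrest := (tendsto_natCast_div_add_atTop (1 : ℝ)).mul h
  rw [one_mul] at hrest
  refine (zero_add L ▸ hfirst.add hrest).congr' ?_
  filter_upwards [eventually_gt_atTop 0] with n hn
  rw [Finset.sum_range_succ']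
  push_cast
  field_simp
  ring

section ConditionalExpectation

variable {Ω : Type*} {m m₀ : MeasurableSpace Ω} {P : Measure Ω}

lemma integrable_sign_comp [IsFiniteMeasure P] {Y : Ω → ℝ} (hY : Measurable Y) :
    Integrable (fun ω => Real.sign (Y ω)) P :=
  Integrable.of_bound (Real.measurable_sign.comp hY).aestronglyMeasurable 1
    (Eventually.of_forall fun _ => Real.abs_sign_le_one _)

lemma condExp_mul_eq_zero_of_condExp_eq_zero {f g : Ω → ℝ} (hf : StronglyMeasurable[m] f)
    (hfg : Integrable (f * g) P) (hg : Integrable g P) (hg₀ : P[g | m] =ᵐ[P] 0) :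
    P[f * g | m] =ᵐ[P] 0 := by
  filter_upwards [condExp_mul_of_stronglyMeasurable_left hf hfg hg, hg₀] with ω h h₀
  simp [h, h₀]

lemma integral_mul_eq_zero_of_condExp_eq_zero [IsFiniteMeasure P] (hm : m ≤ m₀) {f g : Ω → ℝ}
    (hf : StronglyMeasurable[m] f) (hfg : Integrable (f * g) P) (hg : Integrable g P)
    (hg₀ : P[g | m] =ᵐ[P] 0) :
    ∫ ω, f ω * g ω ∂P = 0 := by
  calc ∫ ω, f ω * g ω ∂P = ∫ ω, P[f * g | m] ω ∂P := (integral_condExp hm).symm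
    _ = 0 := by simp [integral_congr_ae (condExp_mul_eq_zero_of_condExp_eq_zero hf hfg hg hg₀)]

/-- Since `Y ≠ 0` a.s., `sign Y = 1 - 2 · 1{Y ≤ 0}` a.s. -/
lemma condExp_sign_of_condExp_indicator [IsFiniteMeasure P] (hm : m ≤ m₀) {Y : Ω → ℝ}
    (hY : Measurable Y) (hY₀ : P {ω | Y ω = 0} = 0) {c : ℝ}
    (h : P[fun ω => if Y ω ≤ 0 then (1 : ℝ) else 0 | m] =ᵐ[P] fun _ => c) :
    P[fun ω => Real.sign (Y ω) | m] =ᵐ[P] fun _ => 1 - 2 * c := by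
  set I : Ω → ℝ := fun ω => if Y ω ≤ 0 then 1 else 0
  have hI : Integrable I P :=
    Integrable.of_bound (Measurable.ite (measurableSet_le hY measurable_const)
      measurable_const measurable_const).aestronglyMeasurable 1
      (Eventually.of_forall fun ω => by simp only [I]; split_ifs <;> norm_num)
  have hsign : (fun ω => Real.sign (Y ω)) =ᵐ[P] (fun _ => (1 : ℝ)) - (2 : ℝ) • I := by
    filter_upwards [measure_eq_zero_iff_ae_notMem.1 hY₀] with ω hω
    rcases lt_or_gt_of_ne hω with hneg | hpos
    · norm_num [I, Real.sign_of_neg hneg, hneg.le]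
    · simp [I, Real.sign_of_pos hpos, hpos.not_ge]
  filter_upwards [condExp_congr_ae (m := m) hsign,
    condExp_sub (integrable_const 1) (hI.smul (2 : ℝ)) m, condExp_smul (2 : ℝ) I m, h]
    with ω h₁ h₂ h₃ h₄
  rw [h₁, h₂, Pi.sub_apply, condExp_const hm, h₃, Pi.smul_apply, h₄, smul_eq_mul]

end ConditionalExpectation

section MartingaleDifference

variable {Ω : Type*} {m₀ : MeasurableSpace Ω} {P : Measure Ω} [IsFiniteMeasure P]
  {D : ℕ → Ω → ℝ} {K : ℝ}

lemma integrable_mul_of_abs_le (hD : ∀ i, StronglyMeasurable (D i))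
    (hD_bdd : ∀ i ω, |D i ω| ≤ K) (i j : ℕ) : Integrable (fun ω => D i ω * D j ω) P := by
  refine Integrable.of_bound ((hD i).mul (hD j)).aestronglyMeasurable (K * K)
    (Eventually.of_forall fun ω => ?_)
  rw [Real.norm_eq_abs, abs_mul]
  exact mul_le_mul (hD_bdd i ω) (hD_bdd j ω) (abs_nonneg _) ((abs_nonneg _).trans (hD_bdd i ω))

lemma integrable_sq_sum_of_abs_le (hD : ∀ i, StronglyMeasurable (D i))
    (hD_bdd : ∀ i ω, |D i ω| ≤ K) (n : ℕ) :
    Integrable (fun ω => (∑ i ∈ Finset.range n, D i ω) ^ 2) P := by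
  simp_rw [sq, Finset.sum_mul_sum]
  exact integrable_finsetSum _ fun i _ => integrable_finsetSum _ fun j _ =>
    integrable_mul_of_abs_le hD hD_bdd i j

/-- Martingale differences are orthogonal in `L²`, so only the diagonal terms survive. -/
lemma integral_sq_sum_le_of_condExp_eq_zero {ℱ : Filtration ℕ m₀}
    (hD_meas : ∀ i, StronglyMeasurable[ℱ (i + 1)] (D i)) (hD_cond : ∀ i, P[D i | ℱ i] =ᵐ[P] 0)
    (hD_bdd : ∀ i ω, |D i ω| ≤ K) (n : ℕ) :
    ∫ ω, (∑ i ∈ Finset.range n, D i ω) ^ 2 ∂P ≤ K ^ 2 * P.real univ * n := by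
  have hD : ∀ i, StronglyMeasurable (D i) := fun i => (hD_meas i).mono (ℱ.le _)
  have hint := integrable_mul_of_abs_le (P := P) hD hD_bdd
  have horth : ∀ i j, i < j → ∫ ω, D i ω * D j ω ∂P = 0 := fun i j hij =>
    integral_mul_eq_zero_of_condExp_eq_zero (ℱ.le j) ((hD_meas i).mono (ℱ.mono hij)) (hint i j)
      (Integrable.of_bound (hD j).aestronglyMeasurable K (Eventually.of_forall (hD_bdd j)))
      (hD_cond j)
  have hdiag : ∀ i, ∫ ω, D i ω * D i ω ∂P ≤ K ^ 2 * P.real univ := fun i => by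
    refine (integral_mono (hint i i) (integrable_const (K ^ 2)) fun ω => ?_).trans
      (by simp [mul_comm])
    rw [← sq, ← sq_abs]
    exact pow_le_pow_left₀ (abs_nonneg _) (hD_bdd i ω) 2
  calc ∫ ω, (∑ i ∈ Finset.range n, D i ω) ^ 2 ∂P
      = ∑ i ∈ Finset.range n, ∑ j ∈ Finset.range n, ∫ ω, D i ω * D j ω ∂P := by
        simp_rw [sq, Finset.sum_mul_sum]
        rw [integral_finsetSum _ fun i _ => integrable_finsetSum _ fun j _ => hint i j]
        exact Finset.sum_congr rfl fun i _ => integral_finsetSum _ fun j _ => hint i j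
    _ = ∑ i ∈ Finset.range n, ∫ ω, D i ω * D i ω ∂P := by
        refine Finset.sum_congr rfl fun i hi => Finset.sum_eq_single_of_mem i hi fun j _ hji => ?_
        rcases lt_or_gt_of_ne hji with hlt | hlt
        · simpa only [mul_comm] using horth j i hlt
        · exact horth i j hlt
    _ ≤ K ^ 2 * P.real univ * n := by
        simpa [mul_comm] using Finset.sum_le_sum fun i (_ : i ∈ Finset.range n) => hdiag i

end MartingaleDifference

section InProbability

variable {Ω : Type*} {m₀ : MeasurableSpace Ω} {P : Measure Ω}

lemma tendstoInMeasure_div_of_integral_sq_le [IsFiniteMeasure P] {f : ℕ → Ω → ℝ} {C : ℝ}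
    (hf : ∀ n, Integrable (fun ω => f n ω ^ 2) P) (hC : ∀ n, ∫ ω, f n ω ^ 2 ∂P ≤ C * n) :
    TendstoInMeasure P (fun n ω => f n ω / n) atTop fun _ => 0 := by
  refine tendstoInMeasure_iff_measureReal_dist.2 fun ε hε => ?_
  refine squeeze_zero' (Eventually.of_forall fun n => measureReal_nonneg)
    ?_ (by simpa using (tendsto_inv_atTop_nhds_zero_nat (𝕜 := ℝ)).const_mul (C / ε ^ 2))
  filter_upwards [eventually_gt_atTop 0] with n hn
  have hn : (0 : ℝ) < n := Nat.cast_pos.2 hn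
  have hsub : {ω | ε ≤ dist (f n ω / n) 0} ⊆ {ω | (ε * n) ^ 2 ≤ f n ω ^ 2} := fun ω hω => by
    have hω : ε ≤ dist (f n ω / n) 0 := hω
    rw [Real.dist_0_eq_abs, abs_div, Nat.abs_cast, le_div_iff₀ hn] at hω
    change (ε * n) ^ 2 ≤ f n ω ^ 2
    rw [← sq_abs (f n ω)]
    exact pow_le_pow_left₀ (by positivity) hω 2
  have hmarkov := mul_meas_ge_le_integral_of_nonneg
    (Eventually.of_forall fun ω => sq_nonneg (f n ω)) (hf n) ((ε * n) ^ 2)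
  calc P.real {ω | ε ≤ dist (f n ω / n) 0} ≤ P.real {ω | (ε * n) ^ 2 ≤ f n ω ^ 2} :=
        measureReal_mono hsub
    _ ≤ C * n / (ε * n) ^ 2 := by
        rw [le_div_iff₀ (by positivity)]
        linarith [hC n]
    _ = C / ε ^ 2 * (n : ℝ)⁻¹ := by field_simp

lemma tendsto_measure_of_tendstoInMeasure [IsProbabilityMeasure P] {f g : ℕ → Ω → ℝ}
    {a b ε : ℝ} (hε : 0 < ε) (hf : TendstoInMeasure P f atTop fun _ => a)
    (hg : TendstoInMeasure P g atTop fun _ => b) {E : ℕ → Set Ω}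
    (hE : ∀ᶠ n in atTop, ∀ᵐ ω ∂P, dist (f n ω) a < ε → dist (g n ω) b < ε → ω ∈ E n) :
    Tendsto (fun n => P (E n)) atTop (𝓝 1) := by
  have hbad := (tendstoInMeasure_iff_dist.1 hf ε hε).add (tendstoInMeasure_iff_dist.1 hg ε hε)
  rw [add_zero] at hbad
  have hcompl : ∀ᶠ n in atTop, 1 - (P {ω | ε ≤ dist (f n ω) a} + P {ω | ε ≤ dist (g n ω) b})
      ≤ P (E n) := by
    filter_upwards [hE] with n hn
    rw [tsub_le_iff_right]
    calc (1 : ℝ≥0∞) = P (E n ∪ (E n)ᶜ) := by simp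
      _ ≤ P (E n) + P ({ω | ε ≤ dist (f n ω) a} ∪ {ω | ε ≤ dist (g n ω) b}) := by
          refine (measure_union_le _ _).trans (add_le_add le_rfl (measure_mono_ae ?_))
          filter_upwards [hn] with ω hω hωE
          by_contra h
          exact hωE (hω (not_le.1 fun h' => h (Or.inl h')) (not_le.1 fun h' => h (Or.inr h')))
      _ ≤ _ := by gcongr; exact measure_union_le _ _
  refine tendsto_of_tendsto_of_tendsto_of_le_of_le' ?_ tendsto_const_nhds hcompl
    (Eventually.of_forall fun n => prob_le_one)
  simpa using ENNReal.Tendsto.sub tendsto_const_nhds hbad (Or.inl ENNReal.one_ne_top)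

end InProbability

section MarkedSum

def markedSum (w y : ℕ → ℝ) (n : ℕ) (x : ℝ) : ℝ :=
  ∑ i ∈ Finset.range n, w i * if y i ≤ x then 1 else 0

variable {w y : ℕ → ℝ} {n : ℕ}

lemma markedSum_sub_const (c x : ℝ) :
    markedSum (fun i => w i - c) y n x = markedSum w y n x - c * markedSum 1 y n x := by
  simp only [markedSum, Finset.mul_sum, ← Finset.sum_sub_distrib]
  exact Finset.sum_congr rfl fun i _ => by simp only [Pi.one_apply]; ring

lemma markedSum_one_nonneg (x : ℝ) : 0 ≤ markedSum 1 y n x :=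
  Finset.sum_nonneg fun i _ => by simp only [Pi.one_apply]; split_ifs <;> norm_num

lemma abs_markedSum_le (x : ℝ) : |markedSum w y n x| ≤ ∑ i ∈ Finset.range n, |w i| :=
  (Finset.abs_sum_le_sum_abs _ _).trans <| Finset.sum_le_sum fun i _ => by
    rw [abs_mul]; split_ifs <;> simp

lemma exists_le_of_markedSum_ne_zero {x : ℝ} (h : markedSum w y n x ≠ 0) :
    ∃ i ∈ Finset.range n, y i ≤ x := by
  by_contra! hlt
  exact h (Finset.sum_eq_zero fun i hi => by simp [(hlt i hi).not_ge])

lemma abs_markedSum_sub_le (hw : ∀ i, |w i| ≤ 1) {x₀ x x₁ : ℝ} (hx₀ : x₀ ≤ x) (hx₁ : x ≤ x₁) :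
    |markedSum w y n x - markedSum w y n x₀| ≤ markedSum 1 y n x₁ - markedSum 1 y n x₀ := by
  simp only [markedSum, ← Finset.sum_sub_distrib, ← mul_sub]
  refine (Finset.abs_sum_le_sum_abs _ _).trans (Finset.sum_le_sum fun i _ => ?_)
  rw [abs_mul, Pi.one_apply, one_mul]
  refine (mul_le_of_le_one_left (abs_nonneg _) (hw i)).trans ?_
  by_cases h₀ : y i ≤ x₀
  · simp [h₀, h₀.trans hx₀, h₀.trans (hx₀.trans hx₁)]
  by_cases h : y i ≤ x
  · simp [h₀, h, h.trans hx₁]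
  · simp only [h₀, h, if_false, sub_self, abs_zero, sub_zero]
    split_ifs <;> norm_num

lemma le_abs_markedSum (hw : ∀ i, |w i| ≤ 1) {x₀ x x₁ : ℝ} (hx₀ : x₀ ≤ x) (hx₁ : x ≤ x₁)
    (c : ℝ) :
    |c| * markedSum 1 y n x₀ - |markedSum (fun i => w i - c) y n x₀|
        - (markedSum 1 y n x₁ - markedSum 1 y n x₀) ≤ |markedSum w y n x| := by
  have hdrift : |c * markedSum 1 y n x₀| = |c| * markedSum 1 y n x₀ := by
    rw [abs_mul, abs_of_nonneg (markedSum_one_nonneg x₀)]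
  have hincr := abs_markedSum_sub_le (y := y) (n := n) hw hx₀ hx₁
  have h₁ := abs_sub_abs_le_abs_sub (c * markedSum 1 y n x₀) (markedSum w y n x₀)
  have h₂ := abs_sub_abs_le_abs_sub (markedSum w y n x₀) (markedSum w y n x)
  rw [abs_sub_comm] at h₁ h₂
  rw [markedSum_sub_const]
  linarith

variable (μ : Measure ℝ) [IsProbabilityMeasure μ]

lemma integrable_inv_cdf_mul_markedSum_sq (hy : ∀ i, 0 < cdf μ (y i)) :
    Integrable (fun x => ((n : ℝ) * cdf μ x)⁻¹ * markedSum w y n x ^ 2) μ := by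
  set A := ∑ i ∈ Finset.range n, |w i|
  set B := ∑ i ∈ Finset.range n, (cdf μ (y i))⁻¹
  have hmeas : Measurable fun x => ((n : ℝ) * cdf μ x)⁻¹ * markedSum w y n x ^ 2 :=
    (measurable_const.mul (monotone_cdf μ).measurable).inv.mul <|
      (Finset.measurable_sum _ fun i _ => measurable_const.mul <|
        Measurable.ite (measurableSet_le measurable_const measurable_id)
          measurable_const measurable_const).pow_const 2
  refine Integrable.of_bound hmeas.aestronglyMeasurable ((n : ℝ)⁻¹ * B * A ^ 2)
    (Eventually.of_forall fun x => ?_)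
  have hB : 0 ≤ B := Finset.sum_nonneg fun i _ => (inv_pos.2 (hy i)).le
  rw [Real.norm_eq_abs, abs_mul, abs_inv, abs_pow, sq_abs, abs_mul, mul_inv, Nat.abs_cast]
  by_cases hV : markedSum w y n x = 0
  · rw [hV, zero_pow two_ne_zero, mul_zero]; positivity
  obtain ⟨i, hi, hix⟩ := exists_le_of_markedSum_ne_zero hV
  have hcdf : |cdf μ x|⁻¹ ≤ B := by
    rw [abs_of_nonneg (cdf_nonneg μ x)]
    calc (cdf μ x)⁻¹ ≤ (cdf μ (y i))⁻¹ := inv_anti₀ (hy i) (monotone_cdf μ hix)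
      _ ≤ B := Finset.single_le_sum (fun j _ => (inv_pos.2 (hy j)).le) hi
  have hA : markedSum w y n x ^ 2 ≤ A ^ 2 := by
    rw [← sq_abs]; exact pow_le_pow_left₀ (abs_nonneg _) (abs_markedSum_le x) 2
  gcongr

lemma le_integral_inv_cdf_mul_markedSum_sq (hy : ∀ i, 0 < cdf μ (y i)) {x₀ x₁ a : ℝ}
    (ha : 0 ≤ a) (h : ∀ x ∈ Ioc x₀ x₁, a ≤ |markedSum w y n x|) :
    a ^ 2 / n * μ.real (Ioc x₀ x₁)
      ≤ ∫ x, ((n : ℝ) * cdf μ x)⁻¹ * markedSum w y n x ^ 2 ∂μ := by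
  have hint := integrable_inv_cdf_mul_markedSum_sq (w := w) (n := n) μ hy
  have hnonneg : ∀ x, 0 ≤ ((n : ℝ) * cdf μ x)⁻¹ * markedSum w y n x ^ 2 := fun x =>
    mul_nonneg (inv_nonneg.2 (mul_nonneg n.cast_nonneg (cdf_nonneg μ x))) (sq_nonneg _)
  calc a ^ 2 / n * μ.real (Ioc x₀ x₁)
      ≤ ∫ x in Ioc x₀ x₁, ((n : ℝ) * cdf μ x)⁻¹ * markedSum w y n x ^ 2 ∂μ :=
        setIntegral_ge_of_const_le_real measurableSet_Ioc (measure_ne_top μ _) (fun x hx => ?_)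
          hint.integrableOn
    _ ≤ _ := setIntegral_le_integral hint (Eventually.of_forall hnonneg)
  by_cases hV : markedSum w y n x = 0
  · have : a = 0 := le_antisymm (by simpa [hV] using h x hx) ha
    simpa [this] using hnonneg x
  obtain ⟨i, -, hix⟩ := exists_le_of_markedSum_ne_zero hV
  have hpos : 0 < cdf μ x := (hy i).trans_le (monotone_cdf μ hix)
  rw [mul_inv, div_eq_inv_mul, mul_assoc]
  gcongr
  calc a ^ 2 ≤ markedSum w y n x ^ 2 := by
        rw [← sq_abs (markedSum w y n x)]; exact pow_le_pow_left₀ ha (h x hx) 2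
    _ ≤ _ := le_mul_of_one_le_left (sq_nonneg _) ((one_le_inv₀ hpos).2 (cdf_le_one μ x))

lemma mul_sq_mul_le_integral_inv_cdf_mul_markedSum_sq (hw : ∀ i, |w i| ≤ 1)
    (hy : ∀ i, 0 < cdf μ (y i)) {x₀ x₁ c η : ℝ} (hn : 0 < n)
    (hmart : dist (markedSum (fun i => w i - c) y n x₀ / n) 0 < η)
    (hdrift : dist ((|c| * markedSum 1 y n x₀ - (markedSum 1 y n x₁ - markedSum 1 y n x₀)) / n)
      (4 * η) < η) :
    n * (2 * η) ^ 2 * μ.real (Ioc x₀ x₁)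
      ≤ ∫ x, ((n : ℝ) * cdf μ x)⁻¹ * markedSum w y n x ^ 2 ∂μ := by
  have hn₀ : (0 : ℝ) < n := Nat.cast_pos.2 hn
  have hη : 0 ≤ η := dist_nonneg.trans hmart.le
  rw [Real.dist_0_eq_abs, abs_div, Nat.abs_cast, div_lt_iff₀ hn₀] at hmart
  rw [Real.dist_eq, abs_lt] at hdrift
  have hdrift' : 3 * η * n < |c| * markedSum 1 y n x₀ - (markedSum 1 y n x₁ - markedSum 1 y n x₀) :=
    (lt_div_iff₀ hn₀).1 (by linarith [hdrift.1])
  have h := le_integral_inv_cdf_mul_markedSum_sq μ hy (x₀ := x₀) (x₁ := x₁) (a := 2 * η * n)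
    (by positivity) fun x hx => by linarith [le_abs_markedSum (y := y) (n := n) hw hx.1.le hx.2 c]
  calc (n : ℝ) * (2 * η) ^ 2 * μ.real (Ioc x₀ x₁)
      = (2 * η * n) ^ 2 / n * μ.real (Ioc x₀ x₁) := by field_simp
    _ ≤ _ := h

end MarkedSum

section SignResiduals

variable {Ω : Type*} {m₀ : MeasurableSpace Ω} {P : Measure Ω} {X : ℤ → Ω → ℝ}

lemma measurable_of_le_of_eq_iSup_comap {ℱ : Filtration ℤ m₀}
    (hℱ : ∀ i : ℤ, (ℱ i : MeasurableSpace Ω) = ⨆ j ≤ i, MeasurableSpace.comap (X j) inferInstance)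
    {j k : ℤ} (hjk : j ≤ k) : Measurable[ℱ k] (X j) :=
  Measurable.of_comap_le <| (hℱ k).symm ▸
    le_iSup₂ (f := fun j (_ : j ≤ k) => MeasurableSpace.comap (X j) inferInstance) j hjk

lemma condExp_sign_sub_eq_zero [IsFiniteMeasure P] (hX_meas : ∀ i, Measurable (X i))
    (ℱ : Filtration ℤ m₀) {S₀ : ℝ → ℝ} (hS₀ : Measurable S₀) {δ : ℝ}
    (halt : ∀ i : ℤ,
      P[(fun ω => if X i ω - S₀ (X (i - 1) ω) ≤ 0 then (1 : ℝ) else 0) | ℱ (i - 1)]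
        =ᵐ[P] fun _ => 1 / 2 - δ)
    (hzero : ∀ i : ℤ, P {ω | X i ω - S₀ (X (i - 1) ω) = 0} = 0) (i : ℤ) :
    P[fun ω => Real.sign (X (i + 1) ω - S₀ (X i ω)) - 2 * δ | ℱ i] =ᵐ[P] 0 := by
  set Y : Ω → ℝ := fun ω => X (i + 1) ω - S₀ (X i ω)
  have hY : Measurable Y := (hX_meas _).sub (hS₀.comp (hX_meas _))
  have hY₀ : P {ω | Y ω = 0} = 0 := by simpa only [add_sub_cancel_right] using hzero (i + 1)
  have hYle : P[fun ω => if Y ω ≤ 0 then (1 : ℝ) else 0 | ℱ i] =ᵐ[P] fun _ => 1 / 2 - δ := by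
    simpa only [add_sub_cancel_right] using halt (i + 1)
  filter_upwards [condExp_sub (integrable_sign_comp hY) (integrable_const (2 * δ)) (ℱ i),
    condExp_sign_of_condExp_indicator (ℱ.le i) hY hY₀ hYle] with ω h₁ h₂
  refine h₁.trans ?_
  rw [Pi.sub_apply, h₂, condExp_const (ℱ.le i)]
  simp only [Pi.zero_apply]
  ring

lemma tendstoInMeasure_markedSum_sign_sub_div [IsFiniteMeasure P]
    (hX_meas : ∀ i, Measurable (X i)) (ℱ : Filtration ℤ m₀)
    (hℱ : ∀ i : ℤ, (ℱ i : MeasurableSpace Ω) = ⨆ j ≤ i, MeasurableSpace.comap (X j) inferInstance)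
    {S₀ : ℝ → ℝ} (hS₀ : Measurable S₀) {δ : ℝ}
    (halt : ∀ i : ℤ,
      P[(fun ω => if X i ω - S₀ (X (i - 1) ω) ≤ 0 then (1 : ℝ) else 0) | ℱ (i - 1)]
        =ᵐ[P] fun _ => 1 / 2 - δ)
    (hzero : ∀ i : ℤ, P {ω | X i ω - S₀ (X (i - 1) ω) = 0} = 0) (a : ℝ) :
    TendstoInMeasure P (fun n ω => markedSum (fun i => Real.sign (X ((i : ℤ) + 1) ω
      - S₀ (X i ω)) - 2 * δ) (fun i => X i ω) n a / n) atTop fun _ => 0 := by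
  let ℱ' : Filtration ℕ m₀ :=
    ⟨fun i => ℱ i, fun _ _ h => ℱ.mono (Int.ofNat_le.2 h), fun _ => ℱ.le _⟩
  set χ : ℕ → Ω → ℝ := fun i ω => if X i ω ≤ a then 1 else 0
  set D : ℕ → Ω → ℝ := fun i ω => (Real.sign (X ((i : ℤ) + 1) ω - S₀ (X i ω)) - 2 * δ) * χ i ω
  have hχ : ∀ (i : ℕ) (k : ℤ), i ≤ k → Measurable[ℱ k] (χ i) := fun i k hk =>
    Measurable.ite (measurableSet_le (measurable_of_le_of_eq_iSup_comap hℱ hk) measurable_const)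
      measurable_const measurable_const
  have hmeas : ∀ (i : ℕ) (k : ℤ), (i : ℤ) + 1 ≤ k → Measurable[ℱ k] (D i) := fun i k hk =>
    ((Real.measurable_sign.comp ((measurable_of_le_of_eq_iSup_comap hℱ hk).sub
      (hS₀.comp (measurable_of_le_of_eq_iSup_comap hℱ (by omega))))).sub measurable_const).mul
    (hχ i k (by omega))
  have hD_meas : ∀ i, StronglyMeasurable[ℱ' (i + 1)] (D i) := fun i =>
    (hmeas i _ (by push_cast; rfl)).stronglyMeasurable
  have hD_bdd : ∀ i ω, |D i ω| ≤ 1 + 2 * |δ| := fun i ω => by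
    rw [abs_mul]
    refine (mul_le_of_le_one_right (abs_nonneg _) (by simp only [χ]; split_ifs <;> simp)).trans ?_
    refine (abs_sub _ _).trans ?_
    rw [abs_mul, abs_two]
    linarith [Real.abs_sign_le_one (X ((i : ℤ) + 1) ω - S₀ (X i ω))]
  have hD_cond : ∀ i, P[D i | ℱ' i] =ᵐ[P] 0 := fun i => by
    have hD_int : Integrable (D i) P :=
      Integrable.of_bound ((hmeas i _ le_rfl).mono (ℱ.le _) le_rfl).aestronglyMeasurable _
        (Eventually.of_forall (hD_bdd i))
    rw [show D i = χ i * fun ω => Real.sign (X ((i : ℤ) + 1) ω - S₀ (X i ω)) - 2 * δ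
      from funext fun ω => mul_comm _ _] at hD_int ⊢
    exact condExp_mul_eq_zero_of_condExp_eq_zero (hχ i i le_rfl).stronglyMeasurable hD_int
      ((integrable_sign_comp ((hX_meas _).sub (hS₀.comp (hX_meas _)))).sub (integrable_const _))
      (condExp_sign_sub_eq_zero hX_meas ℱ hS₀ halt hzero i)
  exact tendstoInMeasure_div_of_integral_sq_le
    (integrable_sq_sum_of_abs_le (fun i => (hD_meas i).mono (ℱ'.le _)) hD_bdd)
    (integral_sq_sum_le_of_condExp_eq_zero hD_meas hD_cond hD_bdd)

lemma ae_tendsto_markedSum_one_div {μ : Measure ℝ} [IsProbabilityMeasure μ]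
    (herg : ∀ g : ℝ → ℝ, Integrable g μ →
      ∀ᵐ ω ∂P, Tendsto (fun n : ℕ =>
          (n : ℝ)⁻¹ * ∑ i ∈ Finset.range n, g (X ((i : ℤ) + 1) ω))
        atTop (𝓝 (∫ x, g x ∂μ))) (a : ℝ) :
    ∀ᵐ ω ∂P, Tendsto (fun n : ℕ => markedSum 1 (fun i => X i ω) n a / n) atTop (𝓝 (cdf μ a)) := by
  have hg : Integrable ((Iic a).indicator (1 : ℝ → ℝ)) μ :=
    (integrable_const (1 : ℝ)).indicator measurableSet_Iic
  filter_upwards [herg _ hg] with ω h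
  rw [integral_indicator_one measurableSet_Iic, ← cdf_eq_real] at h
  refine (tendsto_avg_of_tendsto_avg_succ (u := fun i => (Iic a).indicator (1 : ℝ → ℝ) (X i ω))
    (by push_cast; exact h)).congr fun n => ?_
  simp [markedSum, Set.indicator_apply, div_eq_inv_mul]

lemma tendstoInMeasure_drift_div [IsFiniteMeasure P] {μ : Measure ℝ} [IsProbabilityMeasure μ]
    (hX_meas : ∀ i, Measurable (X i))
    (herg : ∀ g : ℝ → ℝ, Integrable g μ →
      ∀ᵐ ω ∂P, Tendsto (fun n : ℕ =>
          (n : ℝ)⁻¹ * ∑ i ∈ Finset.range n, g (X ((i : ℤ) + 1) ω))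
        atTop (𝓝 (∫ x, g x ∂μ))) (c x₀ x₁ : ℝ) :
    TendstoInMeasure P (fun n ω => (c * markedSum 1 (fun i => X i ω) n x₀
        - (markedSum 1 (fun i => X i ω) n x₁ - markedSum 1 (fun i => X i ω) n x₀)) / n)
      atTop fun _ => c * cdf μ x₀ - (cdf μ x₁ - cdf μ x₀) := by
  have hmeas : ∀ n a, Measurable fun ω => markedSum 1 (fun i => X i ω) n a := fun n a =>
    Finset.measurable_sum _ fun i _ => measurable_const.mul
      (Measurable.ite (measurableSet_le (hX_meas _) measurable_const)
        measurable_const measurable_const)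
  refine tendstoInMeasure_of_tendsto_ae (fun n => ((((hmeas n x₀).const_mul _).sub
    ((hmeas n x₁).sub (hmeas n x₀))).div_const _).aestronglyMeasurable) ?_
  filter_upwards [ae_tendsto_markedSum_one_div herg x₀, ae_tendsto_markedSum_one_div herg x₁]
    with ω h₀ h₁
  refine ((h₀.const_mul c).sub (h₁.sub h₀)).congr fun n => ?_
  ring

lemma ae_forall_cdf_pos {μ : Measure ℝ} [IsProbabilityMeasure μ] [NullSingletonClass μ]
    (hX_meas : ∀ i, Measurable (X i)) (hμ_law : ∀ i : ℤ, P.map (X i) = μ) :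
    ∀ᵐ ω ∂P, ∀ i : ℕ, 0 < cdf μ (X i ω) :=
  ae_all_iff.2 fun i => ae_of_ae_map (p := fun y => 0 < cdf μ y) (hX_meas i).aemeasurable
    (by rw [hμ_law]; exact ae_cdf_pos μ)

end SignResiduals

theorem anderson_darling_test_consistency_general
    (Ω : Type*) [ms : MeasurableSpace Ω] (P : Measure Ω) [IsProbabilityMeasure P]
    -- the strictly stationary ergodic process and its natural filtration
    (X : ℤ → Ω → ℝ) (hX_meas : ∀ i, Measurable (X i))
    (ℱ : Filtration ℤ ms)
    (hℱ : ∀ i : ℤ, (ℱ i : MeasurableSpace Ω)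
      = ⨆ j ≤ i, MeasurableSpace.comap (X j) inferInstance)
    (S₀ : ℝ → ℝ) (hS₀_meas : Measurable S₀)
    -- ergodicity with the absolutely continuous invariant law μ
    (μ : Measure ℝ) [IsProbabilityMeasure μ] (hμ_ac : μ ≪ volume)
    (hμ_law : ∀ i : ℤ, P.map (X i) = μ)
    (herg : ∀ g : ℝ → ℝ, Integrable g μ →
      ∀ᵐ ω ∂P, Tendsto (fun n : ℕ =>
          (n : ℝ)⁻¹ * ∑ i ∈ Finset.range n, g (X ((i : ℤ) + 1) ω))
        atTop (𝓝 (∫ x, g x ∂μ)))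
    -- the distribution function Ψ of μ, with ∫ Ψ^{-1/2} dμ < ∞
    (Ψ : ℝ → ℝ) (hΨ : ∀ x, Ψ x = (μ (Set.Iic x)).toReal)
    -- the alternative hypothesis: P(X_i − S₀(X_{i-1}) ≤ 0 | F_{i-1}) = 1/2 − δ
    (δ : ℝ) (hδ_pos : 0 < |δ|) (hδ_lt : |δ| < 1 / 2)
    (halt : ∀ i : ℤ,
      P[(fun ω => if X i ω - S₀ (X (i - 1) ω) ≤ 0 then (1 : ℝ) else 0) | ℱ (i - 1)]
        =ᵐ[P] fun _ => 1 / 2 - δ)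
    (hzero : ∀ i : ℤ, P {ω | X i ω - S₀ (X (i - 1) ω) = 0} = 0)
    -- the test statistic T_n
    (T : ℕ → Ω → ℝ)
    (hT : ∀ (n : ℕ) (ω : Ω), T n ω =
      ∫ x, ((n : ℝ) * Ψ x)⁻¹ *
        (∑ i ∈ Finset.range n,
          Real.sign (X ((i : ℤ) + 1) ω - S₀ (X (i : ℤ) ω)) *
            (if X (i : ℤ) ω ≤ x then (1 : ℝ) else 0)) ^ 2 ∂μ) :
    -- conclusion: the test is consistent
    ∀ M : ℝ, 0 < M → Tendsto (fun n => P {ω | M < T n ω}) atTop (𝓝 1) := by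
  intro M hM
  have : NullSingletonClass μ := ⟨fun x => hμ_ac (measure_singleton x)⟩
  obtain rfl : Ψ = cdf μ := funext fun x => by rw [hΨ, cdf_eq_real, measureReal_def]
  obtain ⟨x₀, hx₀⟩ := exists_cdf_eq μ (p := 1 / 2) (by norm_num)
  obtain ⟨x₁, hx₁⟩ := exists_cdf_eq μ (p := 1 / 2 + |δ| / 2) ⟨by positivity, by linarith⟩
  have hx : x₀ ≤ x₁ := ((monotone_cdf μ).reflect_lt (by linarith)).le
  set κ := (2 * (|δ| / 8)) ^ 2 * μ.real (Ioc x₀ x₁)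
  have hκ : 0 < κ := mul_pos (by positivity)
    (by rw [measureReal_Ioc_eq_cdf_sub μ hx, hx₀, hx₁]; linarith)
  have hdrift := tendstoInMeasure_drift_div hX_meas herg |2 * δ| x₀ x₁
  rw [hx₀, hx₁, show |2 * δ| * (1 / 2) - (1 / 2 + |δ| / 2 - 1 / 2) = 4 * (|δ| / 8) by
    rw [abs_mul, abs_two]; ring] at hdrift
  obtain ⟨N, hN⟩ := exists_nat_gt (M / κ)
  refine tendsto_measure_of_tendstoInMeasure (by positivity : 0 < |δ| / 8)
    (tendstoInMeasure_markedSum_sign_sub_div hX_meas ℱ hℱ hS₀_meas halt hzero x₀) hdrift ?_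
  filter_upwards [eventually_gt_atTop N] with n hn
  filter_upwards [ae_forall_cdf_pos hX_meas hμ_law] with ω hω hmart hdrift
  rw [hT]
  calc M < N * κ := (div_lt_iff₀ hκ).1 hN
    _ < n * κ := by gcongr
    _ ≤ _ := by
      rw [← mul_assoc]
      exact mul_sq_mul_le_integral_inv_cdf_mul_markedSum_sq μ (fun i => Real.abs_sign_le_one _)
        hω (N.zero_le.trans_lt hn) hmart hdrift

/-- **Consistency of the Anderson–Darling type test.** Under the alternative hypothesis
`P(X_i − S₀(X_{i-1}) ≤ 0 | F_{i-1}) = 1/2 − δ` with `0 < |δ| < 1/2`, the statistic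
`T_n = ∫ (nΨ(x))⁻¹ (Σ_{i=1}^n sgn(X_i − S₀(X_{i-1})) 1_{(-∞,x]}(X_{i-1}))² μ(dx)`
satisfies `P(T_n > M) → 1` for every `M > 0`. -/
theorem anderson_darling_test_consistency
    (Ω : Type*) [ms : MeasurableSpace Ω] (P : Measure Ω) [IsProbabilityMeasure P]
    -- the strictly stationary ergodic process and its natural filtration
    (X : ℤ → Ω → ℝ) (hX_meas : ∀ i, Measurable (X i))
    (ℱ : Filtration ℤ ms)
    (hℱ : ∀ i : ℤ, (ℱ i : MeasurableSpace Ω)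
      = ⨆ j ≤ i, MeasurableSpace.comap (X j) inferInstance)
    (S₀ : ℝ → ℝ) (hS₀_meas : Measurable S₀)
    -- strict stationarity
    (hstat : ∀ (k : ℤ) (nn : ℕ) (idx : Fin nn → ℤ),
      P.map (fun ω => fun j => X (idx j + k) ω) = P.map (fun ω => fun j => X (idx j) ω))
    -- ergodicity with the absolutely continuous invariant law μ
    (μ : Measure ℝ) [IsProbabilityMeasure μ] (hμ_ac : μ ≪ volume)
    (hμ_law : ∀ i : ℤ, P.map (X i) = μ)
    (herg : ∀ g : ℝ → ℝ, Integrable g μ →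
      ∀ᵐ ω ∂P, Tendsto (fun n : ℕ =>
          (n : ℝ)⁻¹ * ∑ i ∈ Finset.range n, g (X ((i : ℤ) + 1) ω))
        atTop (𝓝 (∫ x, g x ∂μ)))
    -- the distribution function Ψ of μ, with ∫ Ψ^{-1/2} dμ < ∞
    (Ψ : ℝ → ℝ) (hΨ : ∀ x, Ψ x = (μ (Set.Iic x)).toReal)
    (hΨ_int : Integrable (fun x => Ψ x ^ (-(1 : ℝ) / 2)) μ)
    -- the alternative hypothesis: P(X_i − S₀(X_{i-1}) ≤ 0 | F_{i-1}) = 1/2 − δ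
    (δ : ℝ) (hδ_pos : 0 < |δ|) (hδ_lt : |δ| < 1 / 2)
    (halt : ∀ i : ℤ,
      P[(fun ω => if X i ω - S₀ (X (i - 1) ω) ≤ 0 then (1 : ℝ) else 0) | ℱ (i - 1)]
        =ᵐ[P] fun _ => 1 / 2 - δ)
    (hzero : ∀ i : ℤ, P {ω | X i ω - S₀ (X (i - 1) ω) = 0} = 0)
    -- the test statistic T_n
    (T : ℕ → Ω → ℝ)
    (hT : ∀ (n : ℕ) (ω : Ω), T n ω =
      ∫ x, ((n : ℝ) * Ψ x)⁻¹ *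
        (∑ i ∈ Finset.range n,
          Real.sign (X ((i : ℤ) + 1) ω - S₀ (X (i : ℤ) ω)) *
            (if X (i : ℤ) ω ≤ x then (1 : ℝ) else 0)) ^ 2 ∂μ) :
    -- conclusion: the test is consistent
    ∀ M : ℝ, 0 < M → Tendsto (fun n => P {ω | M < T n ω}) atTop (𝓝 1) :=
  anderson_darling_test_consistency_general Ω (ms := ms) P X hX_meas ℱ hℱ S₀ hS₀_meas μ hμ_ac hμ_law
    herg Ψ hΨ δ hδ_pos hδ_lt halt hzero T hT
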